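/- Let S be a unital ring, e and f central idempotents of S, and set I = Se, J = Sf. Let P and Q be S-bimodules with ep = p = pf for all p ∈ P and fq = q = qe for all q ∈ Q. Suppose there exist biadditive maps τ : P × Q → I and μ : Q × P → J satisfying, for all s ∈ S, p, p' ∈ P, q, q' ∈ Q, b ∈ J, c ∈ I: τ(sp, q) = sτ(p, q), τ(p, qs) = τ(p, q)s, τ(pb, q) = τ(p, bq), μ(sq, p) = sμ(q, p), μ(q, ps) = μ(q, p)s, μ(qc, p) = μ(q, cp), together with the associativity conditions τ(p, q)p' = pμ(q, p') and μ(q, p)q' = qτ(p, q'), and such that the additive groups generated by the images of τ and μ equal I and J respectively (i.e., (I, J, P, Q, τ, μ) is a strict Morita context). Then P is a partially invertible S-bimodule. -/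

import Mathlib

/-- A partially invertible bimodule: finitely generated projective on both sides,
with the two regular representations `l : S → End(P_S)` and `r : S → End(_S P)`
surjective. -/
def PartiallyInvertible (S : Type*) [Ring S] (P : Type*) [AddCommGroup P]
    [Module S P] [Module Sᵐᵒᵖ P] [SMulCommClass S Sᵐᵒᵖ P] : Prop :=
  Module.Finite S P ∧ Module.Projective S P ∧
    Module.Finite Sᵐᵒᵖ P ∧ Module.Projective Sᵐᵒᵖ P ∧
    (∀ f : P →ₗ[Sᵐᵒᵖ] P, ∃ s : S, ∀ x : P, f x = s • x) ∧
    (∀ f : P →ₗ[S] P, ∃ s : S, ∀ x : P, f x = MulOpposite.op s • x)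

variable {S : Type*} [Ring S]

/-- For an idempotent `e`, the set `Se = {x : x e = x}` as an additive subgroup
(for `e` a central idempotent this is the unital ideal generated by `e`). -/
def idemIdeal (S : Type*) [Ring S] (e : S) : AddSubgroup S where
  carrier := {x : S | x * e = x}
  zero_mem' := zero_mul e
  add_mem' := by
    intro a b ha hb
    show (a + b) * e = a + b
    rw [add_mul, ha, hb]
  neg_mem' := by
    intro a ha
    show (-a) * e = -a
    rw [neg_mul, ha]


lemma exists_sum_repr {S : Type*} [AddCommGroup S] {P Q : Type*} [AddCommGroup P]
    (τ : P → Q → S) (hadd₁ : ∀ p p' q, τ (p + p') q = τ p q + τ p' q)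
    {x : S} (hx : x ∈ AddSubgroup.closure {x : S | ∃ p q, x = τ p q}) :
    ∃ (n : ℕ) (ps : Fin n → P) (qs : Fin n → Q), x = ∑ i, τ (ps i) (qs i) := by
  have hzero : ∀ q, τ 0 q = 0 := by
    intro q
    have h := hadd₁ 0 0 q
    rw [add_zero] at h
    exact (left_eq_add.mp h)
  have hneg : ∀ p q, τ (-p) q = - τ p q := by
    intro p q
    have h := hadd₁ p (-p) q
    rw [add_neg_cancel, hzero] at h
    exact (eq_neg_of_add_eq_zero_right h.symm)
  induction hx using AddSubgroup.closure_induction with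
  | mem x hx => exact ⟨1, fun _ => hx.choose, fun _ => hx.choose_spec.choose,
      by simpa using hx.choose_spec.choose_spec⟩
  | zero => exact ⟨0, Fin.elim0, Fin.elim0, by simp⟩
  | add x y hx hy ihx ihy => ?_
  | neg x hx ihx => ?_
  · obtain ⟨n, ps, qs, rfl⟩ := ihx
    obtain ⟨m, ps', qs', rfl⟩ := ihy
    refine ⟨n + m, Fin.append ps ps', Fin.append qs qs', ?_⟩
    rw [Fin.sum_univ_add]
    simp [Fin.append_left, Fin.append_right]
  · obtain ⟨n, ps, qs, rfl⟩ := ihx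
    exact ⟨n, fun i => -(ps i), qs, by simp [hneg]⟩

/-- If `(I, J, P, Q, τ, μ)` is a strict Morita context, with
`I = Se` and `J = Sf` unital ideals given by central idempotents `e`, `f`, then
`P` is a partially invertible `S`-bimodule. -/
theorem partiallyInvertible_of_moritaContext
    (e f : S) (he : e ∈ Set.center S) (hee : IsIdempotentElem e)
    (hf : f ∈ Set.center S) (hff : IsIdempotentElem f)
    (P Q : Type*) [AddCommGroup P] [AddCommGroup Q]
    [Module S P] [Module Sᵐᵒᵖ P] [SMulCommClass S Sᵐᵒᵖ P]
    [Module S Q] [Module Sᵐᵒᵖ Q] [SMulCommClass S Sᵐᵒᵖ Q]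
    (hP : ∀ p : P, e • p = p ∧ MulOpposite.op f • p = p)
    (hQ : ∀ q : Q, f • q = q ∧ MulOpposite.op e • q = q)
    (τ : P → Q → S) (μ : Q → P → S)
    (hτI : ∀ p q, τ p q ∈ idemIdeal S e)
    (hμJ : ∀ q p, μ q p ∈ idemIdeal S f)
    (hτadd₁ : ∀ p p' q, τ (p + p') q = τ p q + τ p' q)
    (hτadd₂ : ∀ p q q', τ p (q + q') = τ p q + τ p q')
    (hμadd₁ : ∀ q q' p, μ (q + q') p = μ q p + μ q' p)
    (hμadd₂ : ∀ q p p', μ q (p + p') = μ q p + μ q p')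
    (hτl : ∀ (s : S) p q, τ (s • p) q = s * τ p q)
    (hτr : ∀ (s : S) p q, τ p (MulOpposite.op s • q) = τ p q * s)
    (hτbal : ∀ b ∈ idemIdeal S f, ∀ p q, τ (MulOpposite.op b • p) q = τ p (b • q))
    (hμl : ∀ (s : S) q p, μ (s • q) p = s * μ q p)
    (hμr : ∀ (s : S) q p, μ q (MulOpposite.op s • p) = μ q p * s)
    (hμbal : ∀ c ∈ idemIdeal S e, ∀ q p, μ (MulOpposite.op c • q) p = μ q (c • p))
    (hassoc₁ : ∀ p q p', τ p q • p' = MulOpposite.op (μ q p') • p)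
    (hassoc₂ : ∀ q p q', μ q p • q' = MulOpposite.op (τ p q') • q)
    (hτsurj : AddSubgroup.closure {x : S | ∃ p q, x = τ p q} = idemIdeal S e)
    (hμsurj : AddSubgroup.closure {x : S | ∃ q p, x = μ q p} = idemIdeal S f) :
    PartiallyInvertible S P := by
    classical
  have heI : e ∈ idemIdeal S e := hee
  have hfJ : f ∈ idemIdeal S f := hff
  obtain ⟨n, ps, qs, hE⟩ := exists_sum_repr τ hτadd₁ (hτsurj ▸ heI)
  obtain ⟨m, qs', ps', hF⟩ := exists_sum_repr μ hμadd₁ (hμsurj ▸ hfJ)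
  have key_left : ∀ p : P, ∑ j, τ p (qs' j) • ps' j = p := by
    intro p
    calc ∑ j, τ p (qs' j) • ps' j
        = ∑ j, MulOpposite.op (μ (qs' j) (ps' j)) • p :=
          Finset.sum_congr rfl fun j _ => hassoc₁ p (qs' j) (ps' j)
      _ = MulOpposite.op f • p := by
          rw [← Finset.sum_smul, ← Finset.op_sum, ← hF]
      _ = p := (hP p).2
  have key_right : ∀ p : P, ∑ i, MulOpposite.op (μ (qs i) p) • ps i = p := by
    intro p
    calc ∑ i, MulOpposite.op (μ (qs i) p) • ps i
        = ∑ i, τ (ps i) (qs i) • p :=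
          Finset.sum_congr rfl fun i _ => (hassoc₁ (ps i) (qs i) p).symm
      _ = e • p := by rw [← Finset.sum_smul, ← hE]
      _ = p := (hP p).1
  let σL : P →ₗ[S] (Fin m → S) :=
    { toFun := fun p j => τ p (qs' j)
      map_add' := fun p p' => funext fun j => hτadd₁ p p' (qs' j)
      map_smul' := fun s p => funext fun j => hτl s p (qs' j) }
  let πL : (Fin m → S) →ₗ[S] P :=
    { toFun := fun v => ∑ j, v j • ps' j
      map_add' := fun v w => by simp [add_smul, Finset.sum_add_distrib]
      map_smul' := fun s v => by simp [Finset.smul_sum, mul_smul] }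
  have hL : ∀ p, πL (σL p) = p := key_left
  let σR : P →ₗ[Sᵐᵒᵖ] (Fin n → Sᵐᵒᵖ) :=
    { toFun := fun p i => MulOpposite.op (μ (qs i) p)
      map_add' := fun p p' => funext fun i => by
        show MulOpposite.op (μ (qs i) (p + p')) = _
        rw [hμadd₂]
        simp
      map_smul' := fun s p => funext fun i => by
        show MulOpposite.op (μ (qs i) (MulOpposite.op s.unop • p)) = _
        rw [hμr]
        simp [MulOpposite.op_mul] }
  let πR : (Fin n → Sᵐᵒᵖ) →ₗ[Sᵐᵒᵖ] P :=
    { toFun := fun v => ∑ i, v i • ps i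
      map_add' := fun v w => by simp [add_smul, Finset.sum_add_distrib]
      map_smul' := fun s v => by simp [Finset.smul_sum, mul_smul] }
  have hR : ∀ p, πR (σR p) = p := key_right
  refine ⟨Module.Finite.of_surjective πL (fun p => ⟨σL p, hL p⟩),
    Module.Projective.of_split σL πL (LinearMap.ext hL),
    Module.Finite.of_surjective πR (fun p => ⟨σR p, hR p⟩),
    Module.Projective.of_split σR πR (LinearMap.ext hR), ?_, ?_⟩
  · intro g
    refine ⟨∑ i, τ (g (ps i)) (qs i), fun x => ?_⟩
    symm
    calc (∑ i, τ (g (ps i)) (qs i)) • x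
        = ∑ i, τ (g (ps i)) (qs i) • x := Finset.sum_smul
      _ = ∑ i, MulOpposite.op (μ (qs i) x) • g (ps i) :=
          Finset.sum_congr rfl fun i _ => hassoc₁ _ _ _
      _ = ∑ i, g (MulOpposite.op (μ (qs i) x) • ps i) :=
          Finset.sum_congr rfl fun i _ => (map_smul g _ _).symm
      _ = g (∑ i, MulOpposite.op (μ (qs i) x) • ps i) := (map_sum g _ _).symm
      _ = g x := by rw [key_right]
  · intro g
    refine ⟨∑ j, μ (qs' j) (g (ps' j)), fun x => ?_⟩
    symm
    calc MulOpposite.op (∑ j, μ (qs' j) (g (ps' j))) • x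
        = (∑ j, MulOpposite.op (μ (qs' j) (g (ps' j)))) • x := by
          rw [Finset.op_sum]
      _ = ∑ j, MulOpposite.op (μ (qs' j) (g (ps' j))) • x := Finset.sum_smul
      _ = ∑ j, τ x (qs' j) • g (ps' j) :=
          Finset.sum_congr rfl fun j _ => (hassoc₁ x (qs' j) (g (ps' j))).symm
      _ = ∑ j, g (τ x (qs' j) • ps' j) :=
          Finset.sum_congr rfl fun j _ => (map_smul g _ _).symm
      _ = g (∑ j, τ x (qs' j) • ps' j) := (map_sum g _ _).symm
      _ = g x := by rw [key_left]
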